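/- arXiv:1703.04516 — 5 statements merged into one kernel-verified Lean document; each statement's English description precedes it below -/
import Mathlib

section
/- Let A be a Grothendieck abelian category and B a localizing subcategory satisfying (Inj): every injective object of B remains injective in A. Then for every object M of B and every i > 0, the i-th right derived functor of the torsion functor Γ satisfies R^iΓ(M) = 0. -/
/-!
STATEMENT 1. Let `A` be a Grothendieck abelian category and `B` a localizing
subcategory satisfying (Inj): every injective object of `B` remains injective
in `A`.  Then for every object `M` of `B` and every `i > 0`, the `i`-th right
derived functor of the torsion functor `Γ` satisfies `R^iΓ(M) = 0`.

Encoding: the localizing subcategory `B` is the kernel of an exact localization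
functor `T : A ⥤ Q` with fully faithful right adjoint (section functor) `S`.
The torsion functor `Γ` (maximal subobject lying in `B`) is characterized by
the predicate `IsTorsionFunctor`.
-/

open CategoryTheory Limits

universe v u u'

variable {A : Type u} [Category.{v} A] [Abelian A]
variable {Q : Type u'} [Category.{v} Q] [Abelian Q]

/-- Membership in the localizing subcategory `B`, realized as the kernel of the
localization functor `T`. -/
def memB (T : A ⥤ Q) (N : A) : Prop := IsZero (T.obj N)

/-- `Γ` (together with the natural inclusion `ε : Γ ⟶ 𝟭 A`) is the torsion
functor with respect to the localizing subcategory `B = ker T`:  `Γ M` is the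
maximal subobject of `M` belonging to `B`. -/
structure IsTorsionFunctor (T : A ⥤ Q) (Γ : A ⥤ A) (ε : Γ ⟶ 𝟭 A) : Prop where
  mem : ∀ M : A, memB T (Γ.obj M)
  mono : ∀ M : A, Mono (ε.app M)
  isMax : ∀ (M N : A) (f : N ⟶ M), Mono f → memB T N →
    ∃ g : N ⟶ Γ.obj M, g ≫ ε.app M = f

/-!
The full subcategory `B = ker T` is a Serre class closed under finite products, hence abelian,
and `Γ`, corestricted to `B`, is right adjoint to the inclusion `ι : B ⥤ A`. As `ι` preserves
monomorphisms, `B` inherits enough injectives from `A`, and by (Inj) the exact functor `ι`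
turns an injective resolution of `M` in `B` into an injective resolution `I` of `M` in `A` all
of whose terms lie in `B`. On objects of `B` the inclusion `ε : Γ ⟶ 𝟭 A` is an isomorphism, so
`Γ I ≅ I`, and `I` is exact in positive degrees.
-/

namespace CategoryTheory.Functor

variable {C D : Type*} [Category C] [Category D] [HasZeroObject C] [Preadditive C]
  [HasZeroObject D] [Preadditive D] [CategoryWithHomology D]

noncomputable def mapInjectiveResolution (F : C ⥤ D) [F.Additive]
    [F.PreservesInjectiveObjects] [F.PreservesHomology] {Z : C} (I : InjectiveResolution Z) :
    InjectiveResolution (F.obj Z) where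
  cocomplex := (F.mapHomologicalComplex _).obj I.cocomplex
  injective n := F.injective_obj_of_injective (I.injective n)
  ι := (HomologicalComplex.singleMapHomologicalComplex _ _ _).inv.app _ ≫
    (F.mapHomologicalComplex _).map I.ι
  quasiIso := inferInstance

end CategoryTheory.Functor

namespace CategoryTheory.ObjectProperty

instance isClosedUnderLimitsOfShape_isZero {C : Type*} [Category C] [HasZeroMorphisms C]
    (J : Type*) [Category J] : IsClosedUnderLimitsOfShape (IsZero (C := C)) J where
  limitsOfShape_le := by
    rintro X ⟨p⟩
    rw [IsZero.iff_id_eq_zero]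
    exact p.isLimit.hom_ext fun j => (p.prop_diag_obj j).eq_of_tgt _ _

end CategoryTheory.ObjectProperty

instance memB_isSerreClass (T : A ⥤ Q) [PreservesFiniteLimits T] [PreservesFiniteColimits T] :
    ObjectProperty.IsSerreClass (memB T) :=
  inferInstanceAs (ObjectProperty.inverseImage IsZero T).IsSerreClass

instance memB_isClosedUnderFiniteProducts (T : A ⥤ Q) [PreservesFiniteLimits T] :
    ObjectProperty.IsClosedUnderFiniteProducts (memB T) where
  isClosedUnderLimitsOfShape J _ :=
    inferInstanceAs ((ObjectProperty.inverseImage IsZero T).IsClosedUnderLimitsOfShape (Discrete J))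

section

variable (T : A ⥤ Q) [PreservesFiniteLimits T] [PreservesFiniteColimits T]

instance memB_ι_preservesHomology : (ObjectProperty.ι (memB T)).PreservesHomology where
  preservesKernels := ObjectProperty.preservesKernels_ι (memB T)
  preservesCokernels := ObjectProperty.preservesCokernels_ι (memB T)

instance memB_ι_preservesMonomorphisms : (ObjectProperty.ι (memB T)).PreservesMonomorphisms :=
  ObjectProperty.preservesMonomorphisms_ι_of_isNormalEpiCategory (memB T)

end

namespace IsTorsionFunctor

variable {T : A ⥤ Q} {Γ : A ⥤ A} {ε : Γ ⟶ 𝟭 A}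

omit [Abelian A] [Abelian Q] in
lemma isIso_app (hΓ : IsTorsionFunctor T Γ ε) {N : A} (hN : memB T N) : IsIso (ε.app N) := by
  obtain ⟨g, hg⟩ := hΓ.isMax N N (𝟙 N) inferInstance hN
  have := hΓ.mono N
  refine ⟨g, ?_, hg⟩
  rw [← cancel_mono (ε.app N)]
  simp [hg]

noncomputable def adjunction (hΓ : IsTorsionFunctor T Γ ε) :
    ObjectProperty.ι (memB T) ⊣ ObjectProperty.lift (memB T) Γ hΓ.mem :=
  Adjunction.mkOfHomEquiv
    { homEquiv N M :=
        have := hΓ.isIso_app N.property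
        { toFun f := ObjectProperty.homMk (inv (ε.app N.obj) ≫ Γ.map f)
          invFun g := g.hom ≫ ε.app M
          left_inv f := by simp
          right_inv g := by
            have := hΓ.mono M
            ext
            simp [← cancel_mono (ε.app M)] }
      homEquiv_naturality_left_symm f g := by simp
      homEquiv_naturality_right f g := by ext; simp }

noncomputable def mapHomologicalComplexIso [Γ.PreservesZeroMorphisms]
    (hΓ : IsTorsionFunctor T Γ ε) {ι : Type*} {c : ComplexShape ι} (K : HomologicalComplex A c) (hK : ∀ n, memB T (K.X n)) :
    (Γ.mapHomologicalComplex c).obj K ≅ K :=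
  HomologicalComplex.Hom.isoOfComponents
    (fun n => @asIso _ _ _ _ (ε.app (K.X n)) (hΓ.isIso_app (hK n)))
    (fun p q _ => (ε.naturality (K.d p q)).symm)

end IsTorsionFunctor

theorem statement1_general
    -- `A` is Grothendieck abelian (in particular it has enough injectives):
    [EnoughInjectives A]
    -- the localization functor `T` and the section functor `S`:
    (T : A ⥤ Q) (S : Q ⥤ A) (adj : T ⊣ S)
    [PreservesFiniteLimits T]
    -- property (Inj): injective objects of `B` remain injective in `A`:
    (hInj : ∀ I : ObjectProperty.FullSubcategory (memB T), Injective I → Injective I.obj)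
    -- the torsion functor `Γ`:
    (Γ : A ⥤ A) (ε : Γ ⟶ 𝟭 A) [Γ.Additive] (hΓ : IsTorsionFunctor T Γ ε)
    -- an object of `B`:
    (M : A) (hM : memB T M)
    (i : ℕ) (hi : 0 < i) :
    IsZero ((Γ.rightDerived i).obj M) := by
  have := adj.isLeftAdjoint
  have : EnoughInjectives (ObjectProperty.FullSubcategory (memB T)) :=
    EnoughInjectives.of_adjunction hΓ.adjunction
  have : (ObjectProperty.ι (memB T)).PreservesInjectiveObjects := ⟨hInj _⟩
  let J := InjectiveResolution.of (⟨M, hM⟩ : ObjectProperty.FullSubcategory (memB T))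
  let I := (ObjectProperty.ι (memB T)).mapInjectiveResolution J
  obtain ⟨n, rfl⟩ : ∃ n, i = n + 1 := ⟨i - 1, by omega⟩
  refine IsZero.of_iso ?_ (I.isoRightDerivedObj Γ (n + 1))
  refine IsZero.of_iso ?_ ((HomologicalComplex.homologyFunctor A _ (n + 1)).mapIso
    (hΓ.mapHomologicalComplexIso I.cocomplex fun k => (J.cocomplex.X k).property))
  exact (HomologicalComplex.exactAt_iff_isZero_homology _ _).1 (I.cocomplex_exactAt_succ n)

theorem statement1
    -- `A` is Grothendieck abelian (in particular it has enough injectives):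
    [HasColimits A] [AB5 A] [HasSeparator A] [EnoughInjectives A]
    -- the localization functor `T` and the section functor `S`:
    (T : A ⥤ Q) (S : Q ⥤ A) (adj : T ⊣ S)
    [T.Additive] [PreservesFiniteLimits T] [IsIso adj.counit]
    -- property (Inj): injective objects of `B` remain injective in `A`:
    (hInj : ∀ I : ObjectProperty.FullSubcategory (memB T), Injective I → Injective I.obj)
    -- the torsion functor `Γ`:
    (Γ : A ⥤ A) (ε : Γ ⟶ 𝟭 A) [Γ.Additive] (hΓ : IsTorsionFunctor T Γ ε)
    -- an object of `B`:
    (M : A) (hM : memB T M)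
    (i : ℕ) (hi : 0 < i) :
    IsZero ((Γ.rightDerived i).obj M) :=
  statement1_general T S adj hInj Γ ε hΓ M hM i hi
end

section
/- Let A be a Grothendieck abelian category and B a localizing subcategory satisfying (Inj). If I is an injective object of A, then there is a short exact sequence 0 → Γ(I) → I → Σ(I) → 0 in which the first map is the inclusion of the maximal B-subobject and the second is the unit of saturation; moreover Γ(I) and Σ(I) are injective objects of A, and T(I) is an injective object of A/B. -/
/-!
STATEMENT 2. Let `A` be a Grothendieck abelian category and `B` a localizing
subcategory satisfying (Inj).  If `I` is an injective object of `A`, then there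
is a short exact sequence `0 → Γ(I) → I → Σ(I) → 0`, the first map being the
inclusion of the maximal `B`-subobject and the second the unit of saturation;
moreover `Γ(I)` and `Σ(I)` are injective objects of `A`, and `T(I)` is an
injective object of `A/B`.

Encoding: `B` is the kernel of an exact localization functor `T : A ⥤ Q` with
fully faithful right adjoint (section functor) `S`; the saturation is
`Σ = S ∘ T` with unit `adj.unit`, and the torsion functor `Γ` is characterized
by `IsTorsionFunctor`.
-/

open CategoryTheory Limits

universe v u u'

variable {A : Type u} [Category.{v} A] [Abelian A]
variable {Q : Type u'} [Category.{v} Q] [Abelian Q]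

/-! Since `Γ(I)` is injective in `B`, hence in `A` by (Inj), the inclusion `Γ(I) → I` splits:
`I ≅ Γ(I) ⊕ K` with `K` injective and without nonzero subobjects in `B`. For such `K` the unit
`K → Σ(K)` is an isomorphism: `T` inverts it, so its kernel and cokernel lie in `B`; the kernel
vanishes as `K` is torsion-free, and the cokernel is then a direct summand of `Σ(K)` (the unit
splits, `K` being injective) lying in `B`, which is zero because `B` has no nonzero maps into the
image of `S`. Since `T(Γ(I)) = 0`, this identifies `I → Σ(I)` with the projection `I → K`.
Finally `T(I)` is injective because `S` is fully faithful and `S(T(I)) = Σ(I)` is injective. -/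

instance memB_isClosedUnderSubobjects (T : A ⥤ Q) [T.PreservesMonomorphisms] :
    ObjectProperty.IsClosedUnderSubobjects (memB T) where
  prop_of_mono f _ hM := IsZero.of_mono (T.map f) hM

instance memB_isClosedUnderQuotients (T : A ⥤ Q) [T.PreservesEpimorphisms] :
    ObjectProperty.IsClosedUnderQuotients (memB T) where
  prop_of_epi f _ hN := IsZero.of_epi (T.map f) hN

instance memB_containsZero (T : A ⥤ Q) [T.PreservesZeroMorphisms] :
    ObjectProperty.ContainsZero (memB T) where
  exists_zero := ⟨_, isZero_zero A, T.map_isZero (isZero_zero A)⟩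

def IsTorsionFree (T : A ⥤ Q) (K : A) : Prop :=
  ∀ (N : A) (n : N ⟶ K), Mono n → memB T N → n = 0

namespace CategoryTheory

variable {C D : Type*} [Category C] [Category D]

lemma Adjunction.isIso_map_unit_app {L : C ⥤ D} {R : D ⥤ C} (adj : L ⊣ R) [IsIso adj.counit]
    (X : C) : IsIso (L.map (adj.unit.app X)) := by
  have : IsIso (L.map (adj.unit.app X) ≫ adj.counit.app (L.obj X)) := by
    rw [adj.left_triangle_components X]; exact IsIso.id _
  exact IsIso.of_isIso_comp_right _ (adj.counit.app (L.obj X))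

lemma Adjunction.shortExact_unit_of_isIso [HasZeroMorphisms C] {L : C ⥤ D} {R : D ⥤ C}
    (adj : L ⊣ R) {SC : ShortComplex C} (hSC : SC.ShortExact) [IsIso (adj.unit.app SC.X₃)]
    [IsIso (L.map SC.g)] (w : SC.f ≫ adj.unit.app SC.X₂ = 0) :
    (ShortComplex.mk SC.f (adj.unit.app SC.X₂) w).ShortExact := by
  refine ShortComplex.shortExact_of_iso (ShortComplex.isoMk (S₁ := SC) (Iso.refl _) (Iso.refl _)
    (asIso (adj.unit.app SC.X₃) ≪≫ (R.mapIso (asIso (L.map SC.g))).symm) (by simp) ?_) hSC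
  have := adj.unit.naturality SC.g
  dsimp at this ⊢
  simp [reassoc_of% this]

noncomputable def ShortComplex.ShortExact.retractOfInjective [Abelian C] {S : ShortComplex C}
    (hS : S.ShortExact) [Injective S.X₁] : Retract S.X₃ S.X₂ where
  i := hS.splittingOfInjective.s
  r := S.g
  retract := hS.splittingOfInjective.s_g

end CategoryTheory

section Localization

variable {T : A ⥤ Q} {S : Q ⥤ A} [T.Additive]

lemma CategoryTheory.Adjunction.eq_zero_of_memB (adj : T ⊣ S) {N : A} {Y : Q} (hN : memB T N)
    (f : N ⟶ S.obj Y) : f = 0 :=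
  (adj.homEquiv N Y).symm.injective
    (by rw [Adjunction.homAddEquiv_symm_zero]; exact hN.eq_of_src _ _)

lemma memB_kernel_of_isIso_map [PreservesFiniteLimits T] {X Y : A} (f : X ⟶ Y)
    [IsIso (T.map f)] : memB T (kernel f) :=
  (IsZero.of_iso (isZero_zero Q) (kernel.ofMono (T.map f))).of_iso (PreservesKernel.iso T f)

lemma memB_cokernel_of_isIso_map [PreservesFiniteColimits T] {X Y : A} (f : X ⟶ Y)
    [IsIso (T.map f)] : memB T (cokernel f) :=
  (IsZero.of_iso (isZero_zero Q) (cokernel.ofEpi (T.map f))).of_iso (PreservesCokernel.iso T f)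

lemma isIso_map_g_of_memB [PreservesFiniteLimits T] [PreservesFiniteColimits T]
    {SC : ShortComplex A} (hSC : SC.ShortExact) (h : memB T SC.X₁) : IsIso (T.map SC.g) :=
  (hSC.map_of_exact T).isIso_g_iff.mpr h

lemma CategoryTheory.Adjunction.isIso_of_isSplitMono_of_memB_cokernel (adj : T ⊣ S) {K : A} {Y : Q}
    (u : K ⟶ S.obj Y) [IsSplitMono u] (hu : memB T (cokernel u)) : IsIso u := by
  let t := retraction u
  have hp : u ≫ (𝟙 _ - t ≫ u) = 0 := by simp [t]
  have hdesc : cokernel.desc u _ hp = 0 := adj.eq_zero_of_memB hu _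
  have htu : 𝟙 _ - t ≫ u = 0 := by rw [← cokernel.π_desc u _ hp, hdesc, comp_zero]
  exact ⟨t, IsSplitMono.id u, (sub_eq_zero.mp htu).symm⟩

lemma CategoryTheory.Adjunction.isIso_unit_app_of_injective_of_isTorsionFree (adj : T ⊣ S)
    [PreservesFiniteLimits T] [IsIso adj.counit] {K : A} [Injective K]
    (hK : IsTorsionFree T K) : IsIso (adj.unit.app K) := by
  have : PreservesColimits T := adj.leftAdjoint_preservesColimits
  have := adj.isIso_map_unit_app K
  have : Mono (adj.unit.app K) := Abelian.mono_of_kernel_ι_eq_zero _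
    (hK _ _ inferInstance (memB_kernel_of_isIso_map _))
  have : IsSplitMono (adj.unit.app K) := IsSplitMono.mk'
    ⟨Injective.factorThru (𝟙 K) (adj.unit.app K), Injective.comp_factorThru _ _⟩
  exact adj.isIso_of_isSplitMono_of_memB_cokernel _ (memB_cokernel_of_isIso_map _)

end Localization

namespace IsTorsionFunctor

variable {T : A ⥤ Q} {Γ : A ⥤ A} {ε : Γ ⟶ 𝟭 A}

lemma exists_lift [T.PreservesEpimorphisms] (hΓ : IsTorsionFunctor T Γ ε) {N M : A}
    (f : N ⟶ M) (hN : memB T N) : ∃ g : N ⟶ Γ.obj M, g ≫ ε.app M = f := by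
  obtain ⟨g, hg⟩ := hΓ.isMax M _ (Abelian.image.ι f) inferInstance
    (ObjectProperty.prop_of_epi (memB T) (Abelian.factorThruImage f) hN)
  exact ⟨Abelian.factorThruImage f ≫ g, by rw [Category.assoc, hg, Abelian.image.fac]⟩

lemma injective_obj [T.PreservesZeroMorphisms] [T.PreservesMonomorphisms]
    [T.PreservesEpimorphisms] (hΓ : IsTorsionFunctor T Γ ε) (I : A) [Injective I] :
    Injective (⟨Γ.obj I, hΓ.mem I⟩ : ObjectProperty.FullSubcategory (memB T)) where
  factors {X Y} g f _ := by
    have := ObjectProperty.preservesMonomorphisms_ι_of_isNormalEpiCategory (memB T)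
    have : Mono f.hom := (ObjectProperty.ι (memB T)).map_mono f
    have := hΓ.mono I
    obtain ⟨h, hh⟩ := hΓ.exists_lift (Injective.factorThru (g.hom ≫ ε.app I) f.hom) Y.property
    refine ⟨ObjectProperty.homMk h, ?_⟩
    ext
    rw [← cancel_mono (ε.app I)]
    simp only [Functor.id_obj] at hh
    simp [hh]

omit [Abelian Q] in
lemma isTorsionFree_of_retract (hΓ : IsTorsionFunctor T Γ ε) {K M : A} (h : Retract K M)
    (hr : ε.app M ≫ h.r = 0) : IsTorsionFree T K := by
  intro N n _ hN
  obtain ⟨g, hg⟩ := hΓ.isMax M N (n ≫ h.i) inferInstance hN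
  calc n = n ≫ h.i ≫ h.r := by rw [h.retract, Category.comp_id]
    _ = 0 := by rw [← Category.assoc, ← hg, Category.assoc, hr, comp_zero]

end IsTorsionFunctor

theorem statement2_general
    -- the localization functor `T` and the section functor `S`:
    (T : A ⥤ Q) (S : Q ⥤ A) (adj : T ⊣ S)
    [T.Additive] [PreservesFiniteLimits T] [IsIso adj.counit]
    -- property (Inj): injective objects of `B` remain injective in `A`:
    (hInj : ∀ J : ObjectProperty.FullSubcategory (memB T), Injective J → Injective J.obj)
    -- the torsion functor `Γ`:
    (Γ : A ⥤ A) (ε : Γ ⟶ 𝟭 A) (hΓ : IsTorsionFunctor T Γ ε)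
    -- an injective object of `A`:
    (I : A) (hI : Injective I) :
    -- `0 → Γ(I) → I → Σ(I) → 0` is short exact:
    (∃ w : ε.app I ≫ adj.unit.app I = 0,
      (ShortComplex.mk (ε.app I) (adj.unit.app I) w).ShortExact) ∧
    -- `Γ(I)` and `Σ(I) = S(T(I))` are injective in `A`:
    Injective (Γ.obj I) ∧ Injective ((T ⋙ S).obj I) ∧
    -- `T(I)` is injective in `A/B`:
    Injective (T.obj I) := by
  have : PreservesColimits T := adj.leftAdjoint_preservesColimits
  have hΓI : Injective (Γ.obj I) := hInj _ (hΓ.injective_obj I)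
  let SC := ShortComplex.cokernelSequence (ε.app I)
  have hSC : SC.ShortExact :=
    { exact := ShortComplex.cokernelSequence_exact _, mono_f := hΓ.mono I }
  have : Injective SC.X₁ := hΓI
  have : Injective SC.X₂ := hI
  have : Injective SC.X₃ := hSC.retractOfInjective.injective
  have := adj.isIso_unit_app_of_injective_of_isTorsionFree
    (hΓ.isTorsionFree_of_retract hSC.retractOfInjective SC.zero)
  have := isIso_map_g_of_memB hSC (hΓ.mem I)
  have w : ε.app I ≫ adj.unit.app I = 0 := adj.eq_zero_of_memB (hΓ.mem I) _
  have hSES := adj.shortExact_unit_of_isIso hSC w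
  have hSI : Injective ((T ⋙ S).obj I) := hSES.retractOfInjective.injective
  have := adj.fullyFaithfulROfIsIsoCounit.full
  have := adj.fullyFaithfulROfIsIsoCounit.faithful
  exact ⟨⟨w, hSES⟩, hΓI, hSI, adj.injective_of_map_injective _ hSI⟩

theorem statement2
    -- `A` is Grothendieck abelian:
    [HasColimits A] [AB5 A] [HasSeparator A]
    -- the localization functor `T` and the section functor `S`:
    (T : A ⥤ Q) (S : Q ⥤ A) (adj : T ⊣ S)
    [T.Additive] [PreservesFiniteLimits T] [IsIso adj.counit]
    -- property (Inj): injective objects of `B` remain injective in `A`: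
    (hInj : ∀ J : ObjectProperty.FullSubcategory (memB T), Injective J → Injective J.obj)
    -- the torsion functor `Γ`:
    (Γ : A ⥤ A) (ε : Γ ⟶ 𝟭 A) (hΓ : IsTorsionFunctor T Γ ε)
    -- an injective object of `A`:
    (I : A) (hI : Injective I) :
    -- `0 → Γ(I) → I → Σ(I) → 0` is short exact:
    (∃ w : ε.app I ≫ adj.unit.app I = 0,
      (ShortComplex.mk (ε.app I) (adj.unit.app I) w).ShortExact) ∧
    -- `Γ(I)` and `Σ(I) = S(T(I))` are injective in `A`:
    Injective (Γ.obj I) ∧ Injective ((T ⋙ S).obj I) ∧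
    -- `T(I)` is injective in `A/B`:
    Injective (T.obj I) :=
  statement2_general T S adj hInj Γ ε hΓ I hI
end

section
/- Let A be a Grothendieck abelian category and B a localizing subcategory satisfying (Inj). Then the functors T and S restrict to mutually quasi-inverse equivalences between the full subcategory of A consisting of torsion-free injective objects (injective objects I with Γ(I) = 0) and the full subcategory of injective objects of A/B. -/
/-!
STATEMENT 3. Let `A` be a Grothendieck abelian category and `B` a localizing
subcategory satisfying (Inj).  Then the functors `T` and `S` restrict to
mutually quasi-inverse equivalences between the full subcategory of `A`
consisting of torsion-free injective objects (injectives `I` with `Γ(I) = 0`)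
and the full subcategory of injective objects of `A/B`.

Encoding: `B = ker T` for an exact localization functor `T : A ⥤ Q` with fully
faithful right adjoint (section functor) `S` (so the counit `T ∘ S ⟶ 𝟭` is an
isomorphism); the torsion functor `Γ` is characterized by `IsTorsionFunctor`.
The conclusion asserts: `T` sends torsion-free injectives of `A` to injectives
of `A/B`, `S` sends injectives of `A/B` to torsion-free injectives of `A`, and
the unit `I → S(T(I))` is an isomorphism on torsion-free injectives (together
with the counit isomorphism this makes the restricted functors mutually
quasi-inverse equivalences).
-/

open CategoryTheory Limits

universe v u u'

variable {A : Type u} [Category.{v} A] [Abelian A]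
variable {Q : Type u'} [Category.{v} Q] [Abelian Q]

/-!
A morphism into an object `S J` is determined by its image under `T`, since
`T ⊣ S` identifies `X ⟶ S J` with `T X ⟶ J`. Hence `S J` has no nonzero
subobject in `B = ker T`, i.e. it is torsion-free. Conversely, for torsion-free
`I` the kernel of the unit `I ⟶ S (T I)` is killed by the exact functor `T`
(because `T` inverts the unit), so it is torsion and the unit is mono. If `I` is
also injective, the unit splits, and a retraction `r` satisfies `r ≫ η = 𝟙`
because both sides agree after applying `T`. So `I ≅ S (T I)`, and `T I` is
injective because the fully faithful `S` sends it to an injective object.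
-/

namespace CategoryTheory.Adjunction

variable {C D : Type*} [Category C] [Category D] {L : C ⥤ D} {R : D ⥤ C}

lemma hom_ext_of_map_eq (adj : L ⊣ R) {X : C} {Y : D} {f g : X ⟶ R.obj Y}
    (h : L.map f = L.map g) : f = g :=
  (adj.homEquiv X Y).symm.injective (by simp [adj.homEquiv_counit, h])

lemma isIso_map_unit_app_s3 (adj : L ⊣ R) [IsIso adj.counit] (X : C) :
    IsIso (L.map (adj.unit.app X)) :=
  IsIso.of_isIso_fac_right (h := 𝟙 _) (adj.left_triangle_components X)

lemma isIso_of_isSplitMono_of_isIso_map (adj : L ⊣ R) {X : C} {Y : D} (f : X ⟶ R.obj Y)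
    [IsSplitMono f] [IsIso (L.map f)] : IsIso f := by
  have hr : L.map (retraction f) = inv (L.map f) :=
    (IsIso.inv_eq_of_hom_inv_id (by rw [← L.map_comp, IsSplitMono.id, L.map_id])).symm
  refine ⟨retraction f, IsSplitMono.id f, adj.hom_ext_of_map_eq ?_⟩
  rw [L.map_comp, hr, IsIso.inv_hom_id, L.map_id]

end CategoryTheory.Adjunction

namespace IsTorsionFunctor

variable {T : A ⥤ Q} {Γ : A ⥤ A} {ε : Γ ⟶ 𝟭 A}

lemma isZero_obj_rightAdjoint_obj (hΓ : IsTorsionFunctor T Γ ε) [T.PreservesZeroMorphisms]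
    {S : Q ⥤ A} (adj : T ⊣ S) (J : Q) : IsZero (Γ.obj (S.obj J)) := by
  have := hΓ.mono (S.obj J)
  refine IsZero.of_mono_eq_zero (ε.app (S.obj J)) (adj.hom_ext_of_map_eq ?_)
  exact (hΓ.mem (S.obj J)).eq_of_src _ _

lemma mono_of_mono_map (hΓ : IsTorsionFunctor T Γ ε) [T.PreservesZeroMorphisms]
    [T.PreservesMonomorphisms] {I M : A} (hI : IsZero (Γ.obj I)) (f : I ⟶ M) [Mono (T.map f)] :
    Mono f := by
  apply Abelian.mono_of_kernel_ι_eq_zero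
  have hι : T.map (kernel.ι f) = 0 := by
    rw [← cancel_mono (T.map f), ← T.map_comp, kernel.condition, T.map_zero, zero_comp]
  obtain ⟨g, hg⟩ := hΓ.isMax I _ (kernel.ι f) inferInstance (IsZero.of_mono_eq_zero _ hι)
  rw [← hg, hI.eq_of_tgt g 0, zero_comp]

lemma isIso_unit_app (hΓ : IsTorsionFunctor T Γ ε) [T.PreservesZeroMorphisms]
    [T.PreservesMonomorphisms] {S : Q ⥤ A} (adj : T ⊣ S) [IsIso adj.counit] {I : A}
    (hI : Injective I) (hΓI : IsZero (Γ.obj I)) : IsIso (adj.unit.app I) := by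
  have := adj.isIso_map_unit_app_s3 I
  have := hΓ.mono_of_mono_map hΓI (adj.unit.app I)
  have : IsSplitMono (adj.unit.app I) :=
    IsSplitMono.mk' ⟨Injective.factorThru (𝟙 I) _, Injective.comp_factorThru _ _⟩
  exact adj.isIso_of_isSplitMono_of_isIso_map _

end IsTorsionFunctor

theorem statement3_general
    -- the localization functor `T` and the section functor `S`:
    (T : A ⥤ Q) (S : Q ⥤ A) (adj : T ⊣ S)
    [T.Additive] [PreservesFiniteLimits T] [IsIso adj.counit]
    -- the torsion functor `Γ`:
    (Γ : A ⥤ A) (ε : Γ ⟶ 𝟭 A) (hΓ : IsTorsionFunctor T Γ ε) :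
    -- `T` maps torsion-free injectives of `A` to injectives of `A/B`,
    -- and the unit is an isomorphism there (so `S ∘ T ≅ 𝟭` on this subcategory):
    (∀ I : A, Injective I → IsZero (Γ.obj I) →
      Injective (T.obj I) ∧ IsIso (adj.unit.app I)) ∧
    -- `S` maps injectives of `A/B` to torsion-free injectives of `A`
    -- (and `T ∘ S ≅ 𝟭` by the counit isomorphism):
    (∀ J : Q, Injective J →
      Injective (S.obj J) ∧ IsZero (Γ.obj (S.obj J))) := by
  refine ⟨fun I hI hΓI => ?_, fun J _ =>
    ⟨Injective.injective_of_adjoint adj J, hΓ.isZero_obj_rightAdjoint_obj adj J⟩⟩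
  have := hΓ.isIso_unit_app adj hI hΓI
  have := adj.fullyFaithfulROfIsIsoCounit.full
  have := adj.fullyFaithfulROfIsIsoCounit.faithful
  exact ⟨adj.injective_of_map_injective _ (hI.of_iso (asIso (adj.unit.app I))), inferInstance⟩

theorem statement3
    -- `A` is Grothendieck abelian:
    [HasColimits A] [AB5 A] [HasSeparator A]
    -- the localization functor `T` and the section functor `S`:
    (T : A ⥤ Q) (S : Q ⥤ A) (adj : T ⊣ S)
    [T.Additive] [PreservesFiniteLimits T] [IsIso adj.counit]
    -- property (Inj): injective objects of `B` remain injective in `A`: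
    (hInj : ∀ J : ObjectProperty.FullSubcategory (memB T), Injective J → Injective J.obj)
    -- the torsion functor `Γ`:
    (Γ : A ⥤ A) (ε : Γ ⟶ 𝟭 A) (hΓ : IsTorsionFunctor T Γ ε) :
    -- `T` maps torsion-free injectives of `A` to injectives of `A/B`,
    -- and the unit is an isomorphism there (so `S ∘ T ≅ 𝟭` on this subcategory):
    (∀ I : A, Injective I → IsZero (Γ.obj I) →
      Injective (T.obj I) ∧ IsIso (adj.unit.app I)) ∧
    -- `S` maps injectives of `A/B` to torsion-free injectives of `A`
    -- (and `T ∘ S ≅ 𝟭` by the counit isomorphism):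
    (∀ J : Q, Injective J →
      Injective (S.obj J) ∧ IsZero (Γ.obj (S.obj J))) :=
  statement3_general T S adj Γ ε hΓ
end

section
/- Let A be a Grothendieck abelian category and B a localizing subcategory satisfying (Inj). For every object N of A/B, the counit T(S(N)) → N is an isomorphism, and for every i > 0 the higher derived section R^iS(N) belongs to B (equivalently, T(R^iS(N)) = 0). -/
/-!
STATEMENT 7. Let `A` be a Grothendieck abelian category and `B` a localizing
subcategory satisfying (Inj).  For every object `N` of `A/B`, the counit
`T(S(N)) → N` is an isomorphism, and for every `i > 0` the higher derived
section `R^iS(N)` belongs to `B` (equivalently `T(R^iS(N)) = 0`).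

Encoding: `B = ker T` where `T : A ⥤ Q` is an exact functor with right adjoint
`S` (the section functor) which exhibits `Q` as the localization (Serre
quotient) of `A` at the class of morphisms whose kernel and cokernel lie in
`B`.  (Here we do *not* assume that the counit is an isomorphism: this is part
of the conclusion.)
-/

open CategoryTheory Limits

universe v u u'

variable {A : Type u} [Category.{v} A] [Abelian A]
variable {Q : Type u'} [Category.{v} Q] [Abelian Q]

/-- The class of morphisms of `A` whose kernel and cokernel lie in `B = ker T`;
the Serre quotient `A/B` is the localization of `A` at this class. -/
def serreW (T : A ⥤ Q) : MorphismProperty A :=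
  fun _ _ f => IsZero (T.obj (kernel f)) ∧ IsZero (T.obj (cokernel f))

/-!
Because `T` is a localization, the transformation `T η : T ⟶ T ⋙ S ⋙ T` descends to
`θ : 𝟭 ⟶ S ⋙ T`, and the triangle identities make `θ` inverse to the counit. So `S ⋙ T ≅ 𝟭` is
exact. As `T` is exact too, for an injective resolution `I` of `N` the object `T (R^{n+1} S N)`
is the `(n+1)`-st homology of the complex `T (S I)`, the image of `I` under an exact functor,
hence exact in positive degrees.
-/

namespace CategoryTheory

lemma Adjunction.isIso_counit_of_isLocalization {C D : Type*} [Category C] [Category D]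
    {L : C ⥤ D} {G : D ⥤ C} (adj : L ⊣ G) (W : MorphismProperty C) [L.IsLocalization W] :
    IsIso adj.counit := by
  let θ : 𝟭 D ⟶ G ⋙ L :=
    Localization.liftNatTrans L W L (L ⋙ G ⋙ L) (𝟭 D) (G ⋙ L) (Functor.whiskerRight adj.unit L)
  have hθ (X : C) : θ.app (L.obj X) = L.map (adj.unit.app X) := by
    simp [θ, Localization.liftNatTrans_app, Localization.Lifting.iso, Localization.Lifting.id]
  have hθε : θ ≫ adj.counit = 𝟙 _ :=
    Localization.natTrans_ext L W fun X => by simp [hθ X]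
  refine ⟨θ, ?_, hθε⟩
  ext M
  have hnat := θ.naturality (adj.counit.app M)
  dsimp at hnat ⊢
  rw [hnat, hθ (G.obj M), ← L.map_comp, adj.right_triangle_components]
  exact L.map_id _

lemma Functor.isZero_map_rightDerived_obj_succ {C D E : Type*} [Category C] [Category D] [Category E]
    [Abelian C] [Abelian D] [Abelian E] [EnoughInjectives C]
    (F : C ⥤ D) [F.Additive] (G : D ⥤ E) [G.PreservesZeroMorphisms] [G.PreservesHomology]
    [(F ⋙ G).PreservesHomology] (X : C) (n : ℕ) :
    IsZero (G.obj ((F.rightDerived (n + 1)).obj X)) := by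
  let I := InjectiveResolution.of X
  let K := (F.mapHomologicalComplex _).obj I.cocomplex
  have hexact : ((K.sc (n + 1)).map G).Exact :=
    ShortComplex.Exact.map (I.cocomplex_exactAt_succ n) (F ⋙ G)
  exact ((ShortComplex.exact_iff_isZero_homology _).1 hexact).of_iso
    (G.mapIso (I.isoRightDerivedObj F (n + 1)) ≪≫ ((K.sc (n + 1)).mapHomologyIso G).symm)

end CategoryTheory

theorem statement7_general
    -- `A` and `A/B` are Grothendieck abelian (so they have enough injectives):
    [EnoughInjectives Q]
    -- `T` is the (exact) localization functor of `A` along `B`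
    -- and `S` is its section functor:
    (T : A ⥤ Q) (S : Q ⥤ A) (adj : T ⊣ S)
    [S.Additive] [PreservesFiniteLimits T]
    [T.IsLocalization (serreW T)]
    (N : Q) :
    -- the counit `T(S(N)) → N` is an isomorphism:
    IsIso (adj.counit.app N) ∧
    -- and `R^iS(N)` belongs to `B` for `i > 0`:
    (∀ i : ℕ, 0 < i → IsZero (T.obj ((S.rightDerived i).obj N))) := by
  have := adj.isIso_counit_of_isLocalization (serreW T)
  have := adj.leftAdjoint_preservesColimits
  have := preservesFiniteLimits_of_natIso (asIso adj.counit).symm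
  have := preservesFiniteColimits_of_natIso (asIso adj.counit).symm
  refine ⟨inferInstance, fun i hi => ?_⟩
  obtain ⟨n, rfl⟩ := Nat.exists_eq_add_one_of_ne_zero hi.ne'
  exact S.isZero_map_rightDerived_obj_succ T N n

theorem statement7
    -- `A` and `A/B` are Grothendieck abelian (so they have enough injectives):
    [HasColimits A] [AB5 A] [HasSeparator A]
    [HasColimits Q] [AB5 Q] [HasSeparator Q] [EnoughInjectives Q]
    -- `T` is the (exact) localization functor of `A` along `B`
    -- and `S` is its section functor:
    (T : A ⥤ Q) (S : Q ⥤ A) (adj : T ⊣ S)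
    [T.Additive] [S.Additive] [PreservesFiniteLimits T]
    [T.IsLocalization (serreW T)]
    -- property (Inj): injective objects of `B` remain injective in `A`:
    (hInj : ∀ J : ObjectProperty.FullSubcategory (memB T), Injective J → Injective J.obj)
    (N : Q) :
    -- the counit `T(S(N)) → N` is an isomorphism:
    IsIso (adj.counit.app N) ∧
    -- and `R^iS(N)` belongs to `B` for `i > 0`:
    (∀ i : ℕ, 0 < i → IsZero (T.obj ((S.rightDerived i).obj N))) :=
  statement7_general T S adj N
end

section
/- Let A be a Grothendieck abelian category and let B ⊆ B′ ⊆ A be localizing subcategories, each satisfying (Inj) in A. Let T : A → A/B and S : A/B → A be the localization and section functors for B, and let T′ : B′ → B′/B and S′ : B′/B → B′ be the localization and section functors for B as a localizing subcategory of B′. Then: (a) for every object M of B′/B, viewed inside A/B, the object S(M) belongs to B′ and S′(M) ≅ S(M), i.e. S′ coincides with the restriction of S to B′/B; (b) every injective object of B′/B remains injective as an object of A/B. -/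
/-!
STATEMENT 8. Let `A` be a Grothendieck abelian category and `B ⊆ B′ ⊆ A`
localizing subcategories, each satisfying (Inj) in `A`.  Let `T : A → A/B` and
`S : A/B → A` be the localization and section functors for `B`, and let
`T′ : B′ → B′/B` and `S′ : B′/B → B′` be the localization and section functors
for `B` viewed inside `B′`.  Then:
(a) for every object `M` of `B′/B`, viewed inside `A/B`, the object `S(M)`
belongs to `B′` and `S′(M) ≅ S(M)`;
(b) every injective object of `B′/B` remains injective as an object of `A/B`.

Encoding: `B = ker T` for an exact localization functor `T : A ⥤ Q` with fully
faithful right adjoint (section functor) `S`; the larger localizing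
subcategory `B′` is given by a predicate `memB'` (with the closure properties
of a localizing subcategory) containing `B`.  The subcategory `B′/B` of
`Q = A/B` is the full subcategory of objects isomorphic to `T(M)` with
`M ∈ B′`, and `T′` is the restriction of `T`; statement (a) is expressed for
an arbitrary right adjoint `S′` of `T′` (the section functor being unique with
this property).
-/

open CategoryTheory Limits

universe v u u'

variable {A : Type u} [Category.{v} A] [Abelian A]
variable {Q : Type u'} [Category.{v} Q] [Abelian Q]

/-- `P` cuts out a localizing subcategory: it is closed under isomorphisms,
contains the zero objects, and is closed under subobjects, quotients,
extensions and coproducts. -/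
structure IsLocalizingPred {C : Type*} [Category C] [Abelian C] [HasColimits C]
    (P : C → Prop) : Prop where
  of_iso : ∀ {X Y : C}, (X ≅ Y) → P X → P Y
  of_zero : ∀ X : C, IsZero X → P X
  of_mono : ∀ {X Y : C} (f : X ⟶ Y), Mono f → P Y → P X
  of_epi : ∀ {X Y : C} (f : X ⟶ Y), Epi f → P X → P Y
  of_extension : ∀ E : ShortComplex C, E.ShortExact → P E.X₁ → P E.X₃ → P E.X₂
  of_coprod : ∀ {ι : Type v} (f : ι → C), (∀ i, P (f i)) → P (∐ f)

/-- The full subcategory `B′/B` of `Q = A/B`: objects isomorphic to `T(M)` for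
some `M ∈ B′`. -/
def memQuot (T : A ⥤ Q) (memB' : A → Prop) (X : Q) : Prop :=
  ∃ M : A, memB' M ∧ Nonempty (T.obj M ≅ X)

/-- The restriction `T′ : B′ → B′/B` of the localization functor `T`. -/
def Tres (T : A ⥤ Q) (memB' : A → Prop) :
    ObjectProperty.FullSubcategory memB' ⥤ ObjectProperty.FullSubcategory (memQuot T memB') :=
  ObjectProperty.lift _ (ObjectProperty.ι memB' ⋙ T)
    (fun M => ⟨M.obj, M.property, ⟨Iso.refl _⟩⟩)

/-!
For `M ∈ B′` the functor `T` inverts the unit `M ⟶ S (T M)`, so its cokernel lies in `B ⊆ B′`;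
hence `S (T M)`, an extension of that cokernel by a quotient of `M`, lies in `B′`. So `S`
restricts to a right adjoint of `T′`, and (a) is uniqueness of adjoints. For (b), `T′` preserves
monomorphisms since `B′` is closed under kernels, so `S′ J` is injective in `B′`, hence `S J` is
injective in `A` by (Inj) for `B′`, and `J` is injective because `S` is fully faithful.
-/

namespace IsLocalizingPred

variable {C : Type*} [Category C] [Abelian C] [HasColimits C] {P : C → Prop}

theorem of_cokernel (hP : IsLocalizingPred P) {M N : C} (f : M ⟶ N) (hM : P M)
    (hf : P (cokernel f)) : P N := by
  have hK : P (kernel (cokernel.π f)) :=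
    hP.of_iso (Abelian.imageIsoImage f).symm (hP.of_epi (factorThruImage f) inferInstance hM)
  refine hP.of_extension (ShortComplex.mk (kernel.ι (cokernel.π f)) (cokernel.π f)
    (kernel.condition _)) ?_ hK hf
  exact { exact := ShortComplex.exact_of_f_is_kernel _ (kernelIsKernel _) }

theorem preservesMonomorphisms_ι (hP : IsLocalizingPred P) :
    (ObjectProperty.ι P).PreservesMonomorphisms where
  preserves {X _} g _ := by
    let K : ObjectProperty.FullSubcategory P :=
      ⟨kernel g.hom, hP.of_mono (kernel.ι g.hom) inferInstance X.property⟩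
    have hK : (ObjectProperty.homMk (kernel.ι g.hom) : K ⟶ X) = ObjectProperty.homMk 0 :=
      (cancel_mono g).mp (by ext; simp)
    exact Abelian.mono_of_kernel_ι_eq_zero _ (congrArg InducedCategory.Hom.hom hK)

end IsLocalizingPred

section Localization

variable (T : A ⥤ Q) (S : Q ⥤ A) (adj : T ⊣ S) [IsIso adj.counit]

include adj in
theorem memB_cokernel_unit_app [T.Additive] (M : A) : memB T (cokernel (adj.unit.app M)) := by
  have : S.Full := adj.fullyFaithfulROfIsIsoCounit.full
  have : S.Faithful := adj.fullyFaithfulROfIsIsoCounit.faithful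
  have : PreservesColimitsOfSize.{0, 0} T := adj.leftAdjoint_preservesColimits
  exact IsZero.of_iso (isZero_zero Q)
    (PreservesCokernel.iso T _ ≪≫ cokernel.ofEpi (T.map (adj.unit.app M)))

variable [HasColimits A] [T.Additive] (memB' : A → Prop) (hB' : IsLocalizingPred memB')
  (hBB' : ∀ N : A, memB T N → memB' N)

include adj hB' hBB' in
theorem memB'_obj_of_memQuot {X : Q} (hX : memQuot T memB' X) : memB' (S.obj X) := by
  obtain ⟨M, hM, ⟨e⟩⟩ := hX
  exact hB'.of_iso (S.mapIso e)
    (hB'.of_cokernel (adj.unit.app M) hM (hBB' _ (memB_cokernel_unit_app T S adj M)))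

noncomputable def Sres :
    ObjectProperty.FullSubcategory (memQuot T memB') ⥤ ObjectProperty.FullSubcategory memB' :=
  ObjectProperty.lift _ (ObjectProperty.ι _ ⋙ S)
    (fun X => memB'_obj_of_memQuot T S adj memB' hB' hBB' X.property)

noncomputable def adjRes : Tres T memB' ⊣ Sres T S adj memB' hB' hBB' :=
  adj.restrictFullyFaithful (ObjectProperty.fullyFaithfulι _) (ObjectProperty.fullyFaithfulι _)
    (Iso.refl _) (Iso.refl _)

end Localization

theorem statement8_general
    -- `A` is Grothendieck abelian:
    [HasColimits A]
    -- the localization functor `T` and the section functor `S` for `B`: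
    (T : A ⥤ Q) (S : Q ⥤ A) (adj : T ⊣ S)
    [T.Additive] [PreservesFiniteLimits T] [IsIso adj.counit]
    -- `B′` is a localizing subcategory of `A` containing `B`:
    (memB' : A → Prop) (hB' : IsLocalizingPred memB')
    (hBB' : ∀ N : A, memB T N → memB' N)
    -- property (Inj) for `B′` in `A`:
    (hInjB' : ∀ J : ObjectProperty.FullSubcategory memB', Injective J → Injective J.obj) :
    -- (a) the section functor `S` carries `B′/B` into `B′` ...
    (∀ X : ObjectProperty.FullSubcategory (memQuot T memB'), memB' (S.obj X.obj)) ∧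
    -- ... and any section functor `S′` for `T′ : B′ → B′/B` agrees with `S`:
    (∀ (S' : ObjectProperty.FullSubcategory (memQuot T memB') ⥤ ObjectProperty.FullSubcategory memB')
        (_ : Tres T memB' ⊣ S') (X : ObjectProperty.FullSubcategory (memQuot T memB')),
        Nonempty ((S'.obj X).obj ≅ S.obj X.obj)) ∧
    -- (b) injective objects of `B′/B` remain injective in `A/B`:
    (∀ J : ObjectProperty.FullSubcategory (memQuot T memB'), Injective J → Injective J.obj) := by
  have adj' := adjRes T S adj memB' hB' hBB'
  refine ⟨fun X => memB'_obj_of_memQuot T S adj memB' hB' hBB' X.property,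
    fun S' adjS' X => ⟨(ObjectProperty.ι memB').mapIso ((adjS'.rightAdjointUniq adj').app X)⟩,
    fun J hJ => ?_⟩
  have := hB'.preservesMonomorphisms_ι
  have : (Tres T memB' ⋙ ObjectProperty.ι _).PreservesMonomorphisms :=
    inferInstanceAs (ObjectProperty.ι memB' ⋙ T).PreservesMonomorphisms
  have : (Tres T memB').PreservesMonomorphisms :=
    Functor.preservesMonomorphisms_of_preserves_of_reflects _ (ObjectProperty.ι _)
  have : S.Full := adj.fullyFaithfulROfIsIsoCounit.full
  have : S.Faithful := adj.fullyFaithfulROfIsIsoCounit.faithful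
  exact adj.injective_of_map_injective J.obj (hInjB' _ (adj'.map_injective J hJ))

theorem statement8
    -- `A` is Grothendieck abelian:
    [HasColimits A] [AB5 A] [HasSeparator A]
    -- the localization functor `T` and the section functor `S` for `B`:
    (T : A ⥤ Q) (S : Q ⥤ A) (adj : T ⊣ S)
    [T.Additive] [PreservesFiniteLimits T] [IsIso adj.counit]
    -- `B′` is a localizing subcategory of `A` containing `B`:
    (memB' : A → Prop) (hB' : IsLocalizingPred memB')
    (hBB' : ∀ N : A, memB T N → memB' N)
    -- property (Inj) for `B` in `A`:
    (hInjB : ∀ J : ObjectProperty.FullSubcategory (memB T), Injective J → Injective J.obj)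
    -- property (Inj) for `B′` in `A`:
    (hInjB' : ∀ J : ObjectProperty.FullSubcategory memB', Injective J → Injective J.obj) :
    -- (a) the section functor `S` carries `B′/B` into `B′` ...
    (∀ X : ObjectProperty.FullSubcategory (memQuot T memB'), memB' (S.obj X.obj)) ∧
    -- ... and any section functor `S′` for `T′ : B′ → B′/B` agrees with `S`:
    (∀ (S' : ObjectProperty.FullSubcategory (memQuot T memB') ⥤ ObjectProperty.FullSubcategory memB')
        (_ : Tres T memB' ⊣ S') (X : ObjectProperty.FullSubcategory (memQuot T memB')),
        Nonempty ((S'.obj X).obj ≅ S.obj X.obj)) ∧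
    -- (b) injective objects of `B′/B` remain injective in `A/B`:
    (∀ J : ObjectProperty.FullSubcategory (memQuot T memB'), Injective J → Injective J.obj) :=
  statement8_general T S adj memB' hB' hBB' hInjB'
end
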